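/- Consider the tiling system with three tiles {Y, B, W} and forbidden patterns: Y directly left of B, B directly left of Y, any occurrence of W, and B directly below Y. Then the valid tilings are exactly: the all-Y tiling, the all-B tiling, and for each h ∈ ℤ the tiling c_h with c_h(x,y) = Y if y < h and B if y ≥ h. Consequently Sl_τ = {0}. -/

import Mathlib

/-- A finite pattern: a finite support in `ℤ²` together with tile data. -/
structure Pattern (T : Type) where
  support : Finset (ℤ × ℤ)
  data : ℤ × ℤ → T

/-- A tiling system: a finite set of finite forbidden patterns over the tile set `T`. -/
structure TilingSystem (T : Type) where
  F : Set (Pattern T)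
  finite : F.Finite

/-- A tiling is valid when no translate of a forbidden pattern appears in it. -/
def TilingSystem.Valid {T : Type} (τ : TilingSystem T) (c : ℤ × ℤ → T) : Prop :=
  ∀ p ∈ τ.F, ∀ u : ℤ × ℤ, ∃ n ∈ p.support, c (n + u) ≠ p.data n

/-- A vector `v` is a period of the tiling `c`. -/
def IsPeriod {T : Type} (c : ℤ × ℤ → T) (v : ℤ × ℤ) : Prop :=
  ∀ x : ℤ × ℤ, c (x + v) = c x

/-- The direction of a vector of `ℤ²`, an element of `ℚ ∪ {∞}` modelled as `Option ℚ`
(`none` being `∞`, obtained when the first coordinate vanishes). -/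
def dir (v : ℤ × ℤ) : Option ℚ :=
  if v.1 = 0 then none else some ((v.2 : ℚ) / (v.1 : ℚ))

/-- A tiling has slope `θ` when it has a nonzero period and all its nonzero
periods have direction `θ`. -/
def HasSlope {T : Type} (c : ℤ × ℤ → T) (θ : Option ℚ) : Prop :=
  (∃ v : ℤ × ℤ, v ≠ 0 ∧ IsPeriod c v ∧ dir v = θ) ∧
    ∀ v : ℤ × ℤ, v ≠ 0 → IsPeriod c v → dir v = θ

/-- The set of slopes of all valid tilings of a tiling system. -/
def TilingSystem.Slopes {T : Type} (τ : TilingSystem T) : Set (Option ℚ) :=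
  {θ : Option ℚ | ∃ c : ℤ × ℤ → T, τ.Valid c ∧ HasSlope c θ}

inductive Tile where
  | Y | B | W
deriving DecidableEq

/-- Forbidden pattern: a single `W`. -/
def pW : Pattern Tile := ⟨{(0, 0)}, fun _ => Tile.W⟩
/-- Forbidden pattern: `Y` directly left of `B`. -/
def pYB : Pattern Tile := ⟨{(0, 0), (1, 0)}, fun m => if m = (0, 0) then Tile.Y else Tile.B⟩
/-- Forbidden pattern: `B` directly left of `Y`. -/
def pBY : Pattern Tile := ⟨{(0, 0), (1, 0)}, fun m => if m = (0, 0) then Tile.B else Tile.Y⟩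
/-- Forbidden pattern: `Y` directly above `B`... here: `B` directly below `Y`. -/
def pBbelowY : Pattern Tile := ⟨{(0, 0), (0, 1)}, fun m => if m = (0, 0) then Tile.B else Tile.Y⟩

/-- The example tiling system with tiles `Y`, `B`, `W`. -/
def exampleSystem : TilingSystem Tile :=
  ⟨{pW, pYB, pBY, pBbelowY}, (Set.finite_singleton pBbelowY).insert pBY
    |>.insert pYB |>.insert pW⟩

/-!
Since `W` never occurs and `Y`, `B` cannot be horizontal neighbours, every row of a valid tiling
is constant. Forbidding `B` below `Y` then says that the rows coloured `B` form an upper set of `ℤ`,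
which is `∅`, `ℤ` or some `[h, ∞)`. The two constant tilings have the independent periods `(1, 0)`
and `(0, 1)`, hence no slope, while the periods of the split tiling `c_h` are the horizontal vectors.
-/

open Set Tile

section Avoidance

variable {T : Type} (c : ℤ × ℤ → T) (p : Pattern T)

def Pattern.AvoidedBy : Prop :=
  ∀ u : ℤ × ℤ, ∃ n ∈ p.support, c (n + u) ≠ p.data n

lemma TilingSystem.valid_iff_forall_avoidedBy (τ : TilingSystem T) :
    τ.Valid c ↔ ∀ p ∈ τ.F, p.AvoidedBy c :=
  Iff.rfl

variable {c p}

lemma Pattern.avoidedBy_iff_of_support_eq_singleton (hp : p.support = {(0, 0)}) :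
    p.AvoidedBy c ↔ ∀ u, c u ≠ p.data (0, 0) := by
  simp [Pattern.AvoidedBy, hp]

lemma Pattern.avoidedBy_iff_of_support_eq_pair {d : ℤ × ℤ} (hp : p.support = {(0, 0), d}) :
    p.AvoidedBy c ↔ ∀ u, c u = p.data (0, 0) → c (d + u) ≠ p.data d := by
  simp only [Pattern.AvoidedBy, hp, Finset.exists_mem_insert, Finset.mem_singleton, exists_eq_left,
    Prod.mk_zero_zero, zero_add, Ne, or_iff_not_imp_left, not_not]

end Avoidance

lemma exampleSystem_valid_iff (c : ℤ × ℤ → Tile) :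
    exampleSystem.Valid c ↔
      (∀ x, c x ≠ W) ∧ (∀ x, c x = Y → c ((1, 0) + x) ≠ B) ∧
        (∀ x, c x = B → c ((1, 0) + x) ≠ Y) ∧ (∀ x, c x = B → c ((0, 1) + x) ≠ Y) := by
  simp only [TilingSystem.valid_iff_forall_avoidedBy, exampleSystem, mem_insert_iff,
    mem_singleton_iff, forall_eq_or_imp, forall_eq]
  rw [pW.avoidedBy_iff_of_support_eq_singleton rfl, pYB.avoidedBy_iff_of_support_eq_pair rfl,
    pBY.avoidedBy_iff_of_support_eq_pair rfl, pBbelowY.avoidedBy_iff_of_support_eq_pair rfl]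
  simp [pW, pYB, pBY, pBbelowY]

lemma Int.eq_empty_or_univ_or_Ici_of_isUpperSet {S : Set ℤ} (hS : IsUpperSet S) :
    S = ∅ ∨ S = univ ∨ ∃ h, S = Ici h := by
  rcases S.eq_empty_or_nonempty with hempty | hne
  · exact Or.inl hempty
  by_cases hbdd : BddBelow S
  · exact Or.inr <| Or.inr ⟨sInf S, Subset.antisymm (fun y hy => csInf_le hbdd hy)
      (fun y hy => hS hy (Int.csInf_mem hne hbdd))⟩
  · refine Or.inr <| Or.inl <| eq_univ_of_forall fun y => ?_
    obtain ⟨z, hz, hzy⟩ := not_bddBelow_iff.1 hbdd y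
    exact hS hzy.le hz

lemma Tile.eq_of_ne_W_of_ne_W {s t : Tile} (hs : s ≠ W) (ht : t ≠ W) (hYB : s = Y → t ≠ B)
    (hBY : s = B → t ≠ Y) : t = s := by
  cases s <;> cases t <;> simp_all

lemma Tile.eq_Y_of_ne_B {t : Tile} (hW : t ≠ W) (hB : t ≠ B) : t = Y := by
  cases t <;> simp_all

lemma Tile.eq_B_of_ne_Y {t : Tile} (hW : t ≠ W) (hY : t ≠ Y) : t = B := by
  cases t <;> simp_all

open Classical in
noncomputable def rowTiling (S : Set ℤ) : ℤ × ℤ → Tile :=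
  fun x => if x.2 ∈ S then B else Y

lemma rowTiling_valid_of_isUpperSet {S : Set ℤ} (hS : IsUpperSet S) :
    exampleSystem.Valid (rowTiling S) := by
  rw [exampleSystem_valid_iff]
  have hsucc : ∀ y ∈ S, 1 + y ∈ S := fun y hy => hS (by omega) hy
  refine ⟨fun x => ?_, fun x hx => ?_, fun x hx => ?_, fun x hx => ?_⟩ <;>
    by_cases hx2 : x.2 ∈ S <;> simp_all [rowTiling]

lemma exists_isUpperSet_eq_rowTiling_of_valid {c : ℤ × ℤ → Tile} (hc : exampleSystem.Valid c) :
    ∃ S : Set ℤ, IsUpperSet S ∧ c = rowTiling S := by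
  obtain ⟨hW, hYB, hBY, hBbelowY⟩ := (exampleSystem_valid_iff c).1 hc
  have hrow : Function.Periodic c (1, 0) := fun x => by
    rw [add_comm]
    exact Tile.eq_of_ne_W_of_ne_W (hW x) (hW _) (hYB x) (hBY x)
  have hup : ∀ y, c (0, y) = B → c (0, y + 1) = B := fun y hy => by
    refine Tile.eq_B_of_ne_Y (hW _) ?_
    simpa [add_comm] using hBbelowY (0, y) hy
  refine ⟨{y | c (0, y) = B}, fun y z hyz hy => Int.leInduction hy (fun n _ => hup n) z hyz, ?_⟩
  funext x
  have hx : c x = c (0, x.2) := by simpa using hrow.zsmul x.1 (0, x.2)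
  by_cases hB : c (0, x.2) = B
  · simp [hx, rowTiling, hB]
  · simp [hx, rowTiling, Tile.eq_Y_of_ne_B (hW _) hB]

lemma rowTiling_empty : rowTiling ∅ = fun _ => Y := by
  funext x
  simp [rowTiling]

lemma rowTiling_univ : rowTiling univ = fun _ => B := by
  funext x
  simp [rowTiling]

lemma rowTiling_Ici (h : ℤ) : rowTiling (Ici h) = fun x => if x.2 < h then Y else B := by
  funext x
  by_cases hx : x.2 < h <;> simp [rowTiling, hx]

lemma exampleSystem_valid_iff_const_or_split (c : ℤ × ℤ → Tile) :
    exampleSystem.Valid c ↔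
      (c = fun _ => Y) ∨ (c = fun _ => B) ∨ ∃ h : ℤ, c = fun x => if x.2 < h then Y else B := by
  constructor
  · intro hc
    obtain ⟨S, hS, rfl⟩ := exists_isUpperSet_eq_rowTiling_of_valid hc
    rcases Int.eq_empty_or_univ_or_Ici_of_isUpperSet hS with rfl | rfl | ⟨h, rfl⟩
    · exact Or.inl rowTiling_empty
    · exact Or.inr <| Or.inl rowTiling_univ
    · exact Or.inr <| Or.inr ⟨h, rowTiling_Ici h⟩
  · rintro (rfl | rfl | ⟨h, rfl⟩)
    · simpa [rowTiling_empty] using rowTiling_valid_of_isUpperSet isUpperSet_empty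
    · simpa [rowTiling_univ] using rowTiling_valid_of_isUpperSet isUpperSet_univ
    · simpa [rowTiling_Ici] using rowTiling_valid_of_isUpperSet (isUpperSet_Ici h)

section Slopes

variable {T : Type}

lemma HasSlope.unique {c : ℤ × ℤ → T} {θ₁ θ₂ : Option ℚ} (h₁ : HasSlope c θ₁)
    (h₂ : HasSlope c θ₂) : θ₁ = θ₂ := by
  obtain ⟨v, hv, hper, rfl⟩ := h₁.1
  exact h₂.2 v hv hper

lemma dir_of_snd_eq_zero {v : ℤ × ℤ} (hv : v ≠ 0) (hv₂ : v.2 = 0) : dir v = some 0 := by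
  have hv₁ : v.1 ≠ 0 := fun hv₁ => hv (Prod.ext hv₁ hv₂)
  simp [dir, hv₁, hv₂]

lemma not_hasSlope_const (t : T) (θ : Option ℚ) : ¬ HasSlope (fun _ => t) θ := fun hθ => by
  have horizontal := hθ.2 (1, 0) (by simp) fun _ => rfl
  have vertical := hθ.2 (0, 1) (by simp) fun _ => rfl
  simp [dir] at horizontal vertical
  simp [← horizontal] at vertical

lemma isPeriod_split_iff {a b : T} (hab : a ≠ b) (h : ℤ) (v : ℤ × ℤ) :
    IsPeriod (fun x : ℤ × ℤ => if x.2 < h then a else b) v ↔ v.2 = 0 := by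
  constructor
  · intro hv
    by_contra hv₂
    rcases lt_or_gt_of_ne hv₂ with hneg | hpos
    · have := hv (0, h)
      simp only [Prod.snd_add, if_pos (show h + v.2 < h by omega), lt_irrefl, if_false] at this
      exact hab this
    · have := hv (0, h - v.2)
      simp only [Prod.snd_add, sub_add_cancel, lt_irrefl, if_false,
        if_pos (show h - v.2 < h by omega)] at this
      exact hab this.symm
  · intro hv₂ x
    simp [hv₂]

lemma hasSlope_split {a b : T} (hab : a ≠ b) (h : ℤ) :
    HasSlope (fun x : ℤ × ℤ => if x.2 < h then a else b) (some 0) :=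
  ⟨⟨(1, 0), by simp, (isPeriod_split_iff hab h _).2 rfl, dir_of_snd_eq_zero (by simp) rfl⟩,
    fun _ hv hper => dir_of_snd_eq_zero hv ((isPeriod_split_iff hab h _).1 hper)⟩

end Slopes

/-- The valid tilings of the example system are the all-`Y` tiling, the all-`B` tiling
and the split tilings `c_h`; consequently its set of slopes is `{0}`. -/
theorem exampleSystem_valid_and_slopes :
    (∀ c : ℤ × ℤ → Tile, exampleSystem.Valid c ↔
      (c = fun _ => Tile.Y) ∨ (c = fun _ => Tile.B) ∨
        ∃ h : ℤ, c = fun x => if x.2 < h then Tile.Y else Tile.B) ∧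
    exampleSystem.Slopes = {some 0} := by
  refine ⟨exampleSystem_valid_iff_const_or_split, Set.ext fun θ => ⟨?_, ?_⟩⟩
  · rintro ⟨c, hc, hθ⟩
    rcases (exampleSystem_valid_iff_const_or_split c).1 hc with rfl | rfl | ⟨h, rfl⟩
    · exact absurd hθ (not_hasSlope_const _ _)
    · exact absurd hθ (not_hasSlope_const _ _)
    · exact hθ.unique (hasSlope_split (by decide) h)
  · rintro rfl
    exact ⟨_, (exampleSystem_valid_iff_const_or_split _).2 (Or.inr (Or.inr ⟨0, rfl⟩)),
      hasSlope_split (by decide) 0⟩
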